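/- For any real β and reals γ₁, γ₂, γ₃, the integral ∫_{S²} p₁²(p₃² − p₂²) exp(β(γ₁p₁² + γ₂p₂² + γ₃p₃²)) (1 − exp(β(γ₃−γ₂)(p₂²−p₃²))) dp, when multiplied by (γ₃ − γ₂)β, is nonnegative, and is strictly positive if β ≠ 0 and γ₂ ≠ γ₃. -/

import Mathlib

/-!
After multiplication by `(γ₃ - γ₂) β`, the integrand becomes
`p₀² exp(β ⟨γ, p²⟩) · s (eˢ - 1)` with `s = β (γ₃ - γ₂) (p₁² - p₂²)`, which is pointwise
nonnegative since `s` and `eˢ - 1` have the same sign. For strict positivity it is positive on the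
part of the sphere lying over the open set `{x > 0, x² + 2y² < 1}` of the `(p₀, p₁)`-plane; that
part has positive `μH[2]`-measure because the projection to this plane is `1`-Lipschitz. The
integrand is integrable because the sphere, being the image of a compact rectangle under the
smooth map of spherical coordinates, has finite `μH[2]`-measure.
-/

open MeasureTheory

noncomputable def S2 : Set (EuclideanSpace ℝ (Fin 3)) := Metric.sphere 0 1

open Real Set

lemma mul_exp_sub_one_nonneg (s : ℝ) : 0 ≤ s * (exp s - 1) := by
  rcases le_or_gt 0 s with h | h
  · nlinarith [add_one_le_exp s]
  · nlinarith [exp_lt_one_iff.mpr h]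

lemma mul_exp_sub_one_pos {s : ℝ} (hs : s ≠ 0) : 0 < s * (exp s - 1) := by
  rcases hs.lt_or_gt with h | h
  · nlinarith [exp_lt_one_iff.mpr h]
  · nlinarith [add_one_lt_exp hs]

lemma Continuous.integrableOn_of_isCompact_of_measure_ne_top {X E : Type*} [TopologicalSpace X]
    [T2Space X] [MeasurableSpace X] [OpensMeasurableSpace X] [NormedAddCommGroup E]
    [SecondCountableTopologyEither X E] {μ : Measure X} {f : X → E} {K : Set X}
    (hf : Continuous f) (hK : IsCompact K) (hμK : μ K ≠ ⊤) : IntegrableOn f K μ := by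
  obtain ⟨M, hM⟩ := hK.exists_bound_of_continuousOn hf.continuousOn
  exact Measure.integrableOn_of_bounded hμK hf.aestronglyMeasurable
    (ae_restrict_of_forall_mem hK.measurableSet hM)

lemma hausdorffMeasure_image_lt_top_of_contDiffOn {F : Type*} [NormedAddCommGroup F]
    [NormedSpace ℝ F] [MeasurableSpace F] [BorelSpace F] {f : ℝ × ℝ → F} {s : Set (ℝ × ℝ)}
    (hf : ContDiffOn ℝ 1 f s) (hconv : Convex ℝ s) (hs : IsCompact s) :
    μH[2] (f '' s) < ⊤ := by
  obtain ⟨K, hK⟩ := hf.exists_lipschitzOnWith one_ne_zero hconv hs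
  calc μH[2] (f '' s) ≤ K ^ (2 : ℝ) * μH[2] s := hK.hausdorffMeasure_image_le zero_le_two
    _ < ⊤ := by
      rw [hausdorffMeasure_prod_real]
      exact ENNReal.mul_lt_top (by simp) hs.measure_lt_top

lemma EuclideanSpace.norm_eq_one_iff_fin_three (p : EuclideanSpace ℝ (Fin 3)) :
    ‖p‖ = 1 ↔ p 0 ^ 2 + p 1 ^ 2 + p 2 ^ 2 = 1 := by
  simp [EuclideanSpace.norm_eq, Fin.sum_univ_three, sqrt_eq_one]

noncomputable def sphericalCoords (a : ℝ × ℝ) : EuclideanSpace ℝ (Fin 3) :=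
  !₂[cos a.1, sin a.1 * cos a.2, sin a.1 * sin a.2]

lemma contDiff_sphericalCoords : ContDiff ℝ 1 sphericalCoords := by
  refine contDiff_piLp' (p := 2) fun i => ?_
  fin_cases i <;> simp [sphericalCoords] <;> fun_prop

lemma sphere_subset_image_sphericalCoords :
    Metric.sphere (0 : EuclideanSpace ℝ (Fin 3)) 1 ⊆
      sphericalCoords '' (Icc 0 π ×ˢ Icc (-π) π) := by
  intro p hp
  rw [mem_sphere_zero_iff_norm, EuclideanSpace.norm_eq_one_iff_fin_three] at hp
  set z : ℂ := ⟨p 1, p 2⟩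
  have hsin : sin (arccos (p 0)) = ‖z‖ := by
    rw [sin_arccos, Complex.norm_eq_sqrt_sq_add_sq]
    congr 1
    linarith
  have hp0 : -1 ≤ p 0 ∧ p 0 ≤ 1 := by
    rw [← abs_le, ← sq_le_one_iff_abs_le_one]
    nlinarith
  refine ⟨(arccos (p 0), Complex.arg z), ⟨⟨arccos_nonneg _, arccos_le_pi _⟩,
    (Complex.neg_pi_lt_arg z).le, Complex.arg_le_pi z⟩, ?_⟩
  ext i
  fin_cases i <;> simp [sphericalCoords, hsin, cos_arccos hp0.1 hp0.2, Complex.norm_mul_cos_arg,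
    Complex.norm_mul_sin_arg, z]

lemma hausdorffMeasure_sphere_lt_top :
    μH[2] (Metric.sphere (0 : EuclideanSpace ℝ (Fin 3)) 1) < ⊤ :=
  (measure_mono sphere_subset_image_sphericalCoords).trans_lt <|
    hausdorffMeasure_image_lt_top_of_contDiffOn contDiff_sphericalCoords.contDiffOn
      ((convex_Icc _ _).prod (convex_Icc _ _)) (isCompact_Icc.prod isCompact_Icc)

lemma volume_le_hausdorffMeasure_sphere_inter_preimage {V : Set (ℝ × ℝ)}
    (hV : ∀ a ∈ V, a.1 ^ 2 + a.2 ^ 2 ≤ 1) :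
    volume V ≤ μH[2] (Metric.sphere (0 : EuclideanSpace ℝ (Fin 3)) 1 ∩
      (fun p => (p 0, p 1)) ⁻¹' V) := by
  set pr : EuclideanSpace ℝ (Fin 3) → ℝ × ℝ := fun p => (p 0, p 1)
  have hpr : LipschitzWith 1 pr := LipschitzWith.of_dist_le_mul fun p q => by
    simpa [pr, Prod.dist_eq] using max_le (PiLp.dist_apply_le p q 0) (PiLp.dist_apply_le p q 1)
  have hlift : V ⊆ pr '' (Metric.sphere 0 1 ∩ pr ⁻¹' V) := by
    intro a ha
    refine ⟨!₂[a.1, a.2, √(1 - a.1 ^ 2 - a.2 ^ 2)], ⟨?_, by simpa [pr] using ha⟩, by simp [pr]⟩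
    rw [mem_sphere_zero_iff_norm, EuclideanSpace.norm_eq_one_iff_fin_three]
    simp [sq_sqrt (show 0 ≤ 1 - a.1 ^ 2 - a.2 ^ 2 by linarith [hV a ha])]
  calc volume V = μH[2] V := by rw [hausdorffMeasure_prod_real]
    _ ≤ μH[2] (pr '' (Metric.sphere 0 1 ∩ pr ⁻¹' V)) := measure_mono hlift
    _ ≤ (1 : NNReal) ^ (2 : ℝ) * μH[2] (Metric.sphere 0 1 ∩ pr ⁻¹' V) :=
      hpr.hausdorffMeasure_image_le zero_le_two _
    _ = μH[2] (Metric.sphere 0 1 ∩ pr ⁻¹' V) := by simp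

lemma hausdorffMeasure_sphere_inter_pos :
    0 < μH[2] (Metric.sphere (0 : EuclideanSpace ℝ (Fin 3)) 1 ∩
      {p | 0 < p 0 ∧ p 1 ^ 2 < p 2 ^ 2}) := by
  set V : Set (ℝ × ℝ) := {a | 0 < a.1 ∧ a.1 ^ 2 + 2 * a.2 ^ 2 < 1}
  have hV_open : IsOpen V := by
    simp only [V, ofPred_and]
    exact (isOpen_lt continuous_const continuous_fst).inter
      (isOpen_lt (by fun_prop) continuous_const)
  have hV_disk (a) (ha : a ∈ V) : a.1 ^ 2 + a.2 ^ 2 ≤ 1 := by nlinarith [ha.2, sq_nonneg a.2]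
  refine (hV_open.measure_pos volume ⟨(1 / 2, 0), by norm_num [V]⟩).trans_le
    ((volume_le_hausdorffMeasure_sphere_inter_preimage hV_disk).trans
      (measure_mono fun p ⟨hp, hp0, hp1⟩ => ⟨hp, hp0, ?_⟩))
  rw [mem_sphere_zero_iff_norm, EuclideanSpace.norm_eq_one_iff_fin_three] at hp
  nlinarith

theorem symmetrized_integral_pos (β γ₁ γ₂ γ₃ : ℝ) :
    0 ≤ (γ₃ - γ₂) * β * ∫ p in S2, p 0 ^ 2 * (p 2 ^ 2 - p 1 ^ 2) *
        Real.exp (β * (γ₁ * p 0 ^ 2 + γ₂ * p 1 ^ 2 + γ₃ * p 2 ^ 2)) *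
        (1 - Real.exp (β * (γ₃ - γ₂) * (p 1 ^ 2 - p 2 ^ 2))) ∂(μH[2]) ∧
    (β ≠ 0 → γ₂ ≠ γ₃ →
      0 < (γ₃ - γ₂) * β * ∫ p in S2, p 0 ^ 2 * (p 2 ^ 2 - p 1 ^ 2) *
        Real.exp (β * (γ₁ * p 0 ^ 2 + γ₂ * p 1 ^ 2 + γ₃ * p 2 ^ 2)) *
        (1 - Real.exp (β * (γ₃ - γ₂) * (p 1 ^ 2 - p 2 ^ 2))) ∂(μH[2])) := by
  set s : EuclideanSpace ℝ (Fin 3) → ℝ := fun p => β * (γ₃ - γ₂) * (p 1 ^ 2 - p 2 ^ 2)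
  set G : EuclideanSpace ℝ (Fin 3) → ℝ := fun p =>
    p 0 ^ 2 * exp (β * (γ₁ * p 0 ^ 2 + γ₂ * p 1 ^ 2 + γ₃ * p 2 ^ 2)) * (s p * (exp (s p) - 1))
  have hG_nonneg (p) : 0 ≤ G p := by have := mul_exp_sub_one_nonneg (s p); positivity
  rw [← integral_const_mul,
    integral_congr_ae (g := G) (.of_forall fun p => by simp only [G, s]; ring)]
  refine ⟨integral_nonneg hG_nonneg, fun hβ hγ => ?_⟩
  have hint : IntegrableOn G S2 μH[2] := Continuous.integrableOn_of_isCompact_of_measure_ne_top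
    (by fun_prop) (isCompact_sphere 0 1) hausdorffMeasure_sphere_lt_top.ne
  rw [integral_pos_iff_support_of_nonneg hG_nonneg hint,
    Measure.restrict_apply' (s := S2) Metric.isClosed_sphere.measurableSet]
  refine hausdorffMeasure_sphere_inter_pos.trans_le (measure_mono fun p ⟨hp, hp0, hp12⟩ => ?_)
  have hs : s p ≠ 0 :=
    mul_ne_zero (mul_ne_zero hβ (sub_ne_zero.mpr hγ.symm)) (sub_ne_zero.mpr hp12.ne)
  have := mul_exp_sub_one_pos hs
  exact ⟨ne_of_gt (by positivity), hp⟩
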